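/- arXiv:1202.2441 — 4 statements merged into one kernel-verified Lean document; each statement's English description precedes it below -/
import Mathlib

section
/- Let i : R → S be a ring homomorphism such that S is finitely generated projective as a right R-module and Hom_R(S,R) ≅ S as (R,S)-bimodules. Then there exists a Frobenius system (e, ε), i.e., an element e = e¹ ⊗ e² ∈ (S ⊗_R S)^S (meaning s·e¹ ⊗ e² = e¹ ⊗ e²·s for all s ∈ S) and an R-bimodule map ε : S → R satisfying ε(e¹)e² = e¹ε(e²) = 1. -/
/-! A finitely generated projective module has a finite dual basis `(xᵢ, fᵢ)` with
`m = ∑ fᵢ(m) xᵢ`, and the element `∑ xᵢ ⊗ fᵢ` of `S ⊗ Hom_R(S, R)` intertwines every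
endomorphism `T` of `S` acting on the left factor with its transpose acting on the right one.
Transport it along `φ` to `e = ∑ xᵢ ⊗ φ(fᵢ)`: as `φ` turns the transpose of left multiplication
by `s` into right multiplication by `s`, `e` is `S`-invariant. With `ε = φ⁻¹(1)` every functional
is `f = ε(φ(f) · -)`, whence `ε(e¹)e² = φ(ε) = 1` and `e¹ε(e²) = ∑ fᵢ(1) xᵢ = 1`. -/

open TensorProduct

section FrobDefs

variable {R S : Type*} [CommRing R] [Ring S] [Algebra R S]

/-- `x ⊗ y ↦ ε(x) • y`, i.e. `i(ε x) * y`. -/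
noncomputable def ctrL (ε : S →ₗ[R] R) : S ⊗[R] S →ₗ[R] S :=
  (TensorProduct.lid R S).toLinearMap ∘ₗ LinearMap.rTensor S ε

/-- `x ⊗ y ↦ ε(y) • x`, i.e. `x * i(ε y)`. -/
noncomputable def ctrR (ε : S →ₗ[R] R) : S ⊗[R] S →ₗ[R] S :=
  (TensorProduct.rid R S).toLinearMap ∘ₗ LinearMap.lTensor S ε

/-- `(e, ε)` is a Frobenius system for `S/R` : `e ∈ (S ⊗_R S)^S`
(`s·e¹ ⊗ e² = e¹ ⊗ e²·s` for all `s`), `ε : S → R` an `R`-bimodule map,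
and `ε(e¹)e² = e¹ε(e²) = 1`. -/
noncomputable def IsFrobeniusSystem (e : S ⊗[R] S) (ε : S →ₗ[R] R) : Prop :=
  (∀ s : S, LinearMap.rTensor S (LinearMap.mulLeft R s) e
      = LinearMap.lTensor S (LinearMap.mulRight R s) e) ∧
  ctrL ε e = 1 ∧ ctrR ε e = 1

end FrobDefs

namespace Module

variable {R M : Type*} [CommSemiring R] [AddCommMonoid M] [Module R M]

variable (R M) in
theorem Finite.exists_dual_basis_of_projective [Module.Finite R M] [Projective R M] :
    ∃ (n : ℕ) (x : Fin n → M) (f : Fin n → Dual R M), ∀ m, ∑ i, f i m • x i = m := by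
  classical
  obtain ⟨n, π, σ, -, -, hπσ⟩ := Finite.exists_comp_eq_id_of_projective R M
  refine ⟨n, fun i => π fun j => if i = j then 1 else 0, fun i => LinearMap.proj i ∘ₗ σ,
    fun m => ?_⟩
  simpa [← LinearMap.pi_apply_eq_sum_univ] using LinearMap.congr_fun hπσ m

variable {ι : Type*} [Fintype ι] {x : ι → M} {f : ι → Dual R M}

theorem Dual.sum_apply_smul_eq_of_dual_basis (hxf : ∀ m, ∑ i, f i m • x i = m)
    (g : Dual R M) : ∑ i, g (x i) • f i = g := by
  ext m
  conv_rhs => rw [← hxf m]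
  simp [map_sum, mul_comm]

theorem rTensor_sum_tmul_eq_lTensor_dualMap (hxf : ∀ m, ∑ i, f i m • x i = m)
    (T : M →ₗ[R] M) :
    LinearMap.rTensor (Dual R M) T (∑ i, x i ⊗ₜ[R] f i)
      = LinearMap.lTensor M T.dualMap (∑ i, x i ⊗ₜ[R] f i) := by
  calc LinearMap.rTensor (Dual R M) T (∑ i, x i ⊗ₜ[R] f i)
      = ∑ i, (∑ j, f j (T (x i)) • x j) ⊗ₜ[R] f i := by simp [hxf]
    _ = ∑ j, x j ⊗ₜ[R] ∑ i, (f j ∘ₗ T) (x i) • f i := by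
      simp only [TensorProduct.sum_tmul, TensorProduct.tmul_sum, TensorProduct.smul_tmul,
        LinearMap.comp_apply]
      exact Finset.sum_comm
    _ = LinearMap.lTensor M T.dualMap (∑ i, x i ⊗ₜ[R] f i) := by
      simp only [Dual.sum_apply_smul_eq_of_dual_basis hxf, map_sum, LinearMap.lTensor_tmul,
        LinearMap.dualMap_apply']

end Module

theorem symm_one_comp_mulLeft {R S : Type*} [CommSemiring R] [Semiring S] [Algebra R S]
    {φ : (S →ₗ[R] R) ≃ₗ[R] S}
    (hφ : ∀ (f : S →ₗ[R] R) (s : S), φ (f ∘ₗ LinearMap.mulLeft R s) = φ f * s)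
    (f : S →ₗ[R] R) : φ.symm 1 ∘ₗ LinearMap.mulLeft R (φ f) = f :=
  φ.injective (by rw [hφ, φ.apply_symm_apply, one_mul])

/-- If `S` is finitely generated projective as a (right) `R`-module and
`Hom_R(S, R) ≅ S` as `(R,S)`-bimodules (the right `S`-action on `Hom_R(S,R)` being
`(f·s)(x) = f(s·x)`), then `S/R` admits a Frobenius system. -/
theorem frobenius_system_of_hom_iso
    {R S : Type*} [CommRing R] [Ring S] [Algebra R S]
    [Module.Finite R S] [Module.Projective R S]
    (φ : (S →ₗ[R] R) ≃ₗ[R] S)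
    (hφ : ∀ (f : S →ₗ[R] R) (s : S), φ (f ∘ₗ LinearMap.mulLeft R s) = φ f * s) :
    ∃ (e : S ⊗[R] S) (ε : S →ₗ[R] R), IsFrobeniusSystem e ε := by
  obtain ⟨n, x, f, hxf⟩ := Module.Finite.exists_dual_basis_of_projective R S
  have hφ' (s : S) : φ.toLinearMap ∘ₗ (LinearMap.mulLeft R s).dualMap
      = LinearMap.mulRight R s ∘ₗ φ.toLinearMap :=
    LinearMap.ext fun g => hφ g s
  refine ⟨LinearMap.lTensor S φ (∑ i, x i ⊗ₜ f i), φ.symm 1, fun s => ?_, ?_, ?_⟩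
  · rw [← LinearMap.comp_apply, LinearMap.rTensor_comp_lTensor, ← LinearMap.lTensor_comp_rTensor,
      LinearMap.comp_apply, Module.rTensor_sum_tmul_eq_lTensor_dualMap hxf,
      ← LinearMap.lTensor_comp_apply, hφ', LinearMap.lTensor_comp_apply]
  · simp only [ctrL, map_sum, LinearMap.coe_comp, Function.comp_apply, LinearMap.rTensor_tmul,
      LinearMap.lTensor_tmul, LinearEquiv.coe_coe, TensorProduct.lid_tmul]
    simp_rw [← map_smul, ← map_sum, Module.Dual.sum_apply_smul_eq_of_dual_basis hxf,
      φ.apply_symm_apply]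
  · have hε (i) : φ.symm 1 (φ (f i)) = f i 1 := by
      simpa using LinearMap.congr_fun (symm_one_comp_mulLeft hφ (f i)) 1
    simp [ctrR, hε, hxf]
end

section
/- Let i : R → S be a ring homomorphism admitting a Frobenius system (e, ε), i.e., e = e¹ ⊗ e² ∈ (S ⊗_R S)^S and an R-bimodule map ε : S → R with ε(e¹)e² = e¹ε(e²) = 1. Then S is finitely generated projective as a right R-module and Hom_R(S, R) ≅ S as (R,S)-bimodules. -/
/-!
Write `e = ∑ e¹ ⊗ e²`. The centrality of `e` together with `∑ e¹ ε(e²) = 1` gives the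
dual basis identity `x = ∑ e¹ ε(e² x)`, i.e. the identity of `S` is the image of
`∑ ε(e² ·) ⊗ e¹` under `Hom_R(S,R) ⊗_R S → End_R(S)`; this makes `S` finitely generated
projective. The map `s ↦ ε(s ·)` is an `(R,S)`-bimodule map `S → Hom_R(S,R)` with inverse
`f ↦ ∑ f(e¹) e²`: one composite is the identity by `∑ ε(e¹) e² = 1`, the other by the dual
basis identity.
-/

open TensorProduct

section Contraction

variable {R S : Type*} [CommRing R] [Ring S] [Algebra R S]

@[simp] lemma ctrL_tmul (f : S →ₗ[R] R) (x y : S) : ctrL f (x ⊗ₜ[R] y) = f x • y := by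
  simp [ctrL]

@[simp] lemma ctrR_tmul (f : S →ₗ[R] R) (x y : S) : ctrR f (x ⊗ₜ[R] y) = f y • x := by
  simp [ctrR]

lemma ctrL_lTensor_mulRight (f : S →ₗ[R] R) (s : S) (t : S ⊗[R] S) :
    ctrL f (LinearMap.lTensor S (LinearMap.mulRight R s) t) = ctrL f t * s := by
  induction t using TensorProduct.induction_on with
  | zero => simp
  | tmul x y => simp
  | add t u ht hu => simp [ht, hu, add_mul]

lemma ctrR_rTensor_mulLeft (f : S →ₗ[R] R) (s : S) (t : S ⊗[R] S) :
    ctrR f (LinearMap.rTensor S (LinearMap.mulLeft R s) t) = s * ctrR f t := by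
  induction t using TensorProduct.induction_on with
  | zero => simp
  | tmul x y => simp
  | add t u ht hu => simp [ht, hu, mul_add]

lemma ctrL_comp_mulLeft (f : S →ₗ[R] R) (s : S) (t : S ⊗[R] S) :
    ctrL (f ∘ₗ LinearMap.mulLeft R s) t
      = ctrL f (LinearMap.rTensor S (LinearMap.mulLeft R s) t) := by
  induction t using TensorProduct.induction_on with
  | zero => simp
  | tmul x y => simp
  | add t u ht hu => simp [ht, hu]

lemma apply_ctrL (ε f : S →ₗ[R] R) (t : S ⊗[R] S) : ε (ctrL f t) = f (ctrR ε t) := by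
  induction t using TensorProduct.induction_on with
  | zero => simp
  | tmul x y => simp [mul_comm]
  | add t u ht hu => simp [ht, hu]

end Contraction

section CounitDual

variable {R S : Type*} [CommRing R] [Ring S] [Algebra R S]

noncomputable def counitDual (ε : S →ₗ[R] R) : S →ₗ[R] Module.Dual R S :=
  LinearMap.llcomp R S S R ε ∘ₗ LinearMap.mul R S

@[simp] lemma counitDual_apply (ε : S →ₗ[R] R) (s x : S) : counitDual ε s x = ε (s * x) :=
  rfl

lemma counitDual_eq_comp_mulLeft (ε : S →ₗ[R] R) (s : S) :
    counitDual ε s = ε ∘ₗ LinearMap.mulLeft R s := rfl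

lemma counitDual_mul (ε : S →ₗ[R] R) (x s : S) :
    counitDual ε (x * s) = counitDual ε x ∘ₗ LinearMap.mulLeft R s := by
  ext y
  simp [mul_assoc]

lemma dualTensorHom_map_counitDual_comm (ε : S →ₗ[R] R) (e : S ⊗[R] S) (x : S) :
    dualTensorHom R S S (map (counitDual ε) LinearMap.id (TensorProduct.comm R S S e)) x
      = ctrR ε (LinearMap.lTensor S (LinearMap.mulRight R x) e) := by
  induction e using TensorProduct.induction_on with
  | zero => simp
  | tmul y z => simp
  | add t u ht hu => simp [ht, hu]

end CounitDual

namespace IsFrobeniusSystem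

variable {R S : Type*} [CommRing R] [Ring S] [Algebra R S] {e : S ⊗[R] S} {ε : S →ₗ[R] R}

lemma ctrR_lTensor_mulRight (h : IsFrobeniusSystem e ε) (x : S) :
    ctrR ε (LinearMap.lTensor S (LinearMap.mulRight R x) e) = x := by
  rw [← h.1 x, ctrR_rTensor_mulLeft, h.2.2, mul_one]

lemma ctrL_rTensor_mulLeft (h : IsFrobeniusSystem e ε) (x : S) :
    ctrL ε (LinearMap.rTensor S (LinearMap.mulLeft R x) e) = x := by
  rw [h.1 x, ctrL_lTensor_mulRight, h.2.1, one_mul]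

lemma one_mem_range_dualTensorHom (h : IsFrobeniusSystem e ε) :
    1 ∈ LinearMap.range (dualTensorHom R S S) :=
  ⟨_, LinearMap.ext fun x =>
    (dualTensorHom_map_counitDual_comm ε e x).trans (h.ctrR_lTensor_mulRight x)⟩

lemma ctrL_counitDual (h : IsFrobeniusSystem e ε) (x : S) : ctrL (counitDual ε x) e = x := by
  rw [counitDual_eq_comp_mulLeft, ctrL_comp_mulLeft, h.ctrL_rTensor_mulLeft]

lemma counitDual_ctrL (h : IsFrobeniusSystem e ε) (f : Module.Dual R S) :
    counitDual ε (ctrL f e) = f := by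
  ext x
  rw [counitDual_apply, ← ctrL_lTensor_mulRight, apply_ctrL, h.ctrR_lTensor_mulRight]

lemma counitDual_bijective (h : IsFrobeniusSystem e ε) : Function.Bijective (counitDual ε) :=
  ⟨Function.LeftInverse.injective (g := fun f => ctrL f e) h.ctrL_counitDual,
    Function.RightInverse.surjective (g := fun f => ctrL f e) h.counitDual_ctrL⟩

end IsFrobeniusSystem

/-- If `S/R` admits a Frobenius system, then `S` is finitely generated projective
as a (right) `R`-module, and `Hom_R(S,R) ≅ S` as `(R,S)`-bimodules, the right
`S`-action on `Hom_R(S,R)` being `(f·s)(x) = f(s·x)`. -/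
theorem finite_projective_and_hom_iso_of_frobenius_system
    {R S : Type*} [CommRing R] [Ring S] [Algebra R S]
    (e : S ⊗[R] S) (ε : S →ₗ[R] R) (h : IsFrobeniusSystem e ε) :
    Module.Finite R S ∧ Module.Projective R S ∧
      ∃ φ : (S →ₗ[R] R) ≃ₗ[R] S,
        ∀ (f : S →ₗ[R] R) (s : S), φ (f ∘ₗ LinearMap.mulLeft R s) = φ f * s := by
  refine ⟨.of_one_mem_range_dualTensorHom h.one_mem_range_dualTensorHom,
    .of_one_mem_range_dualTensorHom h.one_mem_range_dualTensorHom, ?_⟩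
  let ψ := LinearEquiv.ofBijective (counitDual ε) h.counitDual_bijective
  refine ⟨ψ.symm, fun f s => ψ.symm_apply_eq.mpr ?_⟩
  rw [LinearEquiv.ofBijective_apply, counitDual_mul,
    ← LinearEquiv.ofBijective_apply (hf := h.counitDual_bijective), ψ.apply_symm_apply]
end

section
/- Let S/R be a Frobenius extension with Frobenius system (e, ε), and regard S as a Frobenius R-coring via Δ(s) = s·e, counit ε. Then the category of right S-modules is isomorphic to the category of right S-comodules: a right S-module M becomes a comodule via ρ(m) = m·e¹ ⊗ e², a right S-comodule M becomes a module via m·s = m₍₀₎ε(m₍₁₎s), and these constructions are mutually inverse and functorial (acting as the identity on morphisms). -/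
/-!
Since `e = e¹ ⊗ e²` and `ε` form a dual basis (`ε(e² s) e¹ = s = ε(s e¹) e²`), the map
`g ↦ g(e¹) ⊗ e²` is a bijection `Hom_R(S, M) ≃ M ⊗_R S`, with inverse
`m ⊗ x ↦ (s ↦ ε(x s) m)`. Composing with it turns an `R`-bilinear action `M → Hom_R(S, M)`
into a coaction `M → M ⊗_R S` and back. Evaluation at `1` corresponds to the counit, so
unitality matches counitality; coassociativity of `m ↦ m·e¹ ⊗ e²` is, after cancelling the
injective map twice, the identity `(m·s)·t = m·(s t)`; and `f` commutes with the coactions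
iff `f ∘ (m·-) = (f m)·-`, i.e. iff `f` is `S`-linear.
-/

open TensorProduct

section FrobDefs

variable {R S : Type*} [CommRing R] [Ring S] [Algebra R S]

/-- The comultiplication `Δ(s) = s·e` of the associated coring. -/
noncomputable def Δe (e : S ⊗[R] S) : S →ₗ[R] S ⊗[R] S :=
  LinearMap.restrictScalars R (LinearMap.toSpanSingleton S (S ⊗[R] S) e)

/-- A right `S`-module structure on the `R`-module `M` (extending its
`R`-structure along `R → S`), given by an `R`-bilinear unital associative
right action. -/
structure RightModStr (R S M : Type*) [CommRing R] [Ring S] [Algebra R S]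
    [AddCommGroup M] [Module R M] where
  act : M →ₗ[R] S →ₗ[R] M
  act_one : ∀ m : M, act m 1 = m
  act_mul : ∀ (m : M) (s t : S), act (act m s) t = act m (s * t)

/-- A right comodule structure over the coring `(S, Δ, ε)` on the `R`-module
`M`: a coassociative counital right coaction. -/
structure RightComodStr (R S M : Type*) [CommRing R] [Ring S] [Algebra R S]
    [AddCommGroup M] [Module R M] (Δ : S →ₗ[R] S ⊗[R] S) (ε : S →ₗ[R] R) where
  ρ : M →ₗ[R] M ⊗[R] S
  counit : ∀ m : M, TensorProduct.rid R M (LinearMap.lTensor M ε (ρ m)) = m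
  coassoc : ∀ m : M, TensorProduct.assoc R M S S (LinearMap.rTensor S ρ (ρ m))
      = LinearMap.lTensor M Δ (ρ m)

end FrobDefs
open LinearMap

namespace LinearMap

variable {R : Type*} [CommRing R] {M N P Q : Type*}
  [AddCommGroup M] [Module R M] [AddCommGroup N] [Module R N]
  [AddCommGroup P] [Module R P] [AddCommGroup Q] [Module R Q]

theorem rid_lTensor_rTensor (g : P →ₗ[R] M) (φ : Q →ₗ[R] R) (w : P ⊗[R] Q) :
    TensorProduct.rid R M (lTensor M φ (rTensor Q g w))
      = g (TensorProduct.rid R P (lTensor P φ w)) := by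
  induction w using TensorProduct.induction_on with
  | zero => simp
  | tmul x y => simp
  | add w w' hw hw' => simp only [map_add, hw, hw']

theorem lid_rTensor_lTensor (g : Q →ₗ[R] N) (φ : P →ₗ[R] R) (w : P ⊗[R] Q) :
    TensorProduct.lid R N (rTensor N φ (lTensor P g w))
      = g (TensorProduct.lid R Q (rTensor Q φ w)) := by
  induction w using TensorProduct.induction_on with
  | zero => simp
  | tmul x y => simp
  | add w w' hw hw' => simp only [map_add, hw, hw']

theorem rTensor_smulRight (φ : P →ₗ[R] R) (m : M) (w : P ⊗[R] Q) :
    rTensor Q (φ.smulRight m) w = m ⊗ₜ TensorProduct.lid R Q (rTensor Q φ w) := by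
  induction w using TensorProduct.induction_on with
  | zero => simp
  | tmul x y => simp [TensorProduct.smul_tmul]
  | add w w' hw hw' => simp only [map_add, hw, hw', TensorProduct.tmul_add]

theorem assoc_rTensor_rTensor (g : P →ₗ[R] M) (w : (P ⊗[R] Q) ⊗[R] N) :
    TensorProduct.assoc R M Q N (rTensor N (rTensor Q g) w)
      = rTensor (Q ⊗[R] N) g (TensorProduct.assoc R P Q N w) := by
  rw [rTensor_tensor]; simp

end LinearMap

section Frobenius

variable {R S : Type*} [CommRing R] [Ring S] [Algebra R S] {e : S ⊗[R] S} {ε : S →ₗ[R] R}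
  {M N : Type*} [AddCommGroup M] [Module R M] [AddCommGroup N] [Module R N]

theorem Δe_apply (e : S ⊗[R] S) (s : S) : Δe e s = rTensor S (mulLeft R s) e := by
  change s • e = _
  induction e using TensorProduct.induction_on with
  | zero => simp
  | tmul x y => simp [TensorProduct.smul_tmul']
  | add w w' hw hw' => simp only [smul_add, map_add, hw, hw']

namespace IsFrobeniusSystem

theorem rid_lTensor_comp_mulRight (h : IsFrobeniusSystem e ε) (s : S) :
    TensorProduct.rid R S (lTensor S (ε ∘ₗ mulRight R s) e) = s := by
  rw [lTensor_comp_apply, ← h.1 s, rid_lTensor_rTensor]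
  change s * ctrR ε e = s
  rw [h.2.2, mul_one]

theorem lid_rTensor_comp_mulLeft (h : IsFrobeniusSystem e ε) (s : S) :
    TensorProduct.lid R S (rTensor S (ε ∘ₗ mulLeft R s) e) = s := by
  rw [rTensor_comp_apply, h.1 s, lid_rTensor_lTensor]
  change ctrL ε e * s = s
  rw [h.2.1, one_mul]

theorem assoc_rTensor_Δe (h : IsFrobeniusSystem e ε) :
    TensorProduct.assoc R S S S (rTensor S (Δe e) e) = lTensor S (Δe e) e := by
  obtain ⟨T, hT⟩ := TensorProduct.exists_finset e
  have hΔ : ∀ s, Δe e s = ∑ p ∈ T, (s * p.1) ⊗ₜ[R] p.2 := fun s => by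
    rw [Δe_apply, hT, map_sum]; simp
  have hΔ' : ∀ s, Δe e s = ∑ p ∈ T, p.1 ⊗ₜ[R] (p.2 * s) := fun s => by
    rw [Δe_apply, h.1 s, hT, map_sum]; simp
  set Δ := Δe e
  calc TensorProduct.assoc R S S S (rTensor S Δ e)
      = ∑ p ∈ T, ∑ q ∈ T, q.1 ⊗ₜ[R] ((q.2 * p.1) ⊗ₜ[R] p.2) := by
        simp [hT, hΔ', TensorProduct.sum_tmul]
    _ = lTensor S Δ e := by
        rw [Finset.sum_comm]
        simp [hT, hΔ, TensorProduct.tmul_sum]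

end IsFrobeniusSystem

variable (e M) in
/-- `g ↦ g(e¹) ⊗ e²` -/
noncomputable def homToTensor : (S →ₗ[R] M) →ₗ[R] M ⊗[R] S :=
  applyₗ e ∘ₗ rTensorHom S

variable (ε M) in
/-- `m ⊗ x ↦ (s ↦ ε(x s) m)` -/
noncomputable def tensorToHom : M ⊗[R] S →ₗ[R] S →ₗ[R] M :=
  mk₂ R (fun z s => TensorProduct.rid R M (lTensor M (ε ∘ₗ mulRight R s) z))
    (fun _ _ _ => by simp only [map_add])
    (fun _ _ _ => by simp only [map_smul])
    (fun z s t => by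
      have hadd :
          ε ∘ₗ mulRight R (s + t) = ε ∘ₗ mulRight R s + ε ∘ₗ mulRight R t := by
        ext; simp [mul_add]
      simp only [hadd, lTensor_add, LinearMap.add_apply, map_add])
    (fun r z s => by
      have hsmul : ε ∘ₗ mulRight R (r • s) = r • (ε ∘ₗ mulRight R s) := by
        ext; simp
      simp only [hsmul, lTensor_smul, LinearMap.smul_apply, map_smul])

theorem homToTensor_apply (g : S →ₗ[R] M) : homToTensor e M g = rTensor S g e := rfl

theorem tensorToHom_apply (z : M ⊗[R] S) (s : S) :
    tensorToHom ε M z s = TensorProduct.rid R M (lTensor M (ε ∘ₗ mulRight R s) z) := rfl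

theorem tensorToHom_apply_one (z : M ⊗[R] S) :
    tensorToHom ε M z 1 = TensorProduct.rid R M (lTensor M ε z) := by
  rw [tensorToHom_apply, mulRight_one, comp_id]

theorem rTensor_homToTensor (f : M →ₗ[R] N) (g : S →ₗ[R] M) :
    rTensor S f (homToTensor e M g) = homToTensor e N (f ∘ₗ g) :=
  (rTensor_comp_apply S f g e).symm

theorem IsFrobeniusSystem.tensorToHom_homToTensor (h : IsFrobeniusSystem e ε) (g : S →ₗ[R] M) :
    tensorToHom ε M (homToTensor e M g) = g := by
  ext s
  rw [tensorToHom_apply, homToTensor_apply, rid_lTensor_rTensor, h.rid_lTensor_comp_mulRight]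

theorem IsFrobeniusSystem.homToTensor_tensorToHom (h : IsFrobeniusSystem e ε) (z : M ⊗[R] S) :
    homToTensor e M (tensorToHom ε M z) = z := by
  induction z using TensorProduct.induction_on with
  | zero => simp only [map_zero]
  | tmul m x =>
    have hx : tensorToHom ε M (m ⊗ₜ x) = (ε ∘ₗ mulLeft R x).smulRight m := by
      ext s; simp [tensorToHom_apply]
    rw [hx, homToTensor_apply, rTensor_smulRight, h.lid_rTensor_comp_mulLeft]
  | add z z' hz hz' => simp only [map_add, hz, hz']

theorem IsFrobeniusSystem.homToTensor_injective (h : IsFrobeniusSystem e ε) :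
    Function.Injective (homToTensor e M) :=
  Function.LeftInverse.injective h.tensorToHom_homToTensor

theorem IsFrobeniusSystem.coassoc_iff (h : IsFrobeniusSystem e ε) (a : M →ₗ[R] S →ₗ[R] M)
    (m : M) :
    TensorProduct.assoc R M S S (rTensor S (homToTensor e M ∘ₗ a) (homToTensor e M (a m)))
        = lTensor M (Δe e) (homToTensor e M (a m)) ↔
      ∀ s t, a (a m s) t = a m (s * t) := by
  have hrhs : lTensor M (Δe e) (homToTensor e M (a m))
      = TensorProduct.assoc R M S S
          (homToTensor e (M ⊗[R] S) (rTensor S (a m) ∘ₗ Δe e)) := by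
    rw [homToTensor_apply, homToTensor_apply, rTensor_comp_apply, assoc_rTensor_rTensor,
      h.assoc_rTensor_Δe]
    exact LinearMap.congr_fun
      ((lTensor_comp_rTensor _ _ _).trans (rTensor_comp_lTensor _ _ _).symm) e
  rw [rTensor_homToTensor, hrhs, (TensorProduct.assoc R M S S).injective.eq_iff,
    h.homToTensor_injective.eq_iff, LinearMap.ext_iff]
  refine forall_congr' fun s => ?_
  rw [comp_apply, comp_apply, comp_apply, Δe_apply, ← rTensor_comp_apply, ← homToTensor_apply,
    h.homToTensor_injective.eq_iff, LinearMap.ext_iff]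
  rfl

noncomputable def RightModStr.toComod (h : IsFrobeniusSystem e ε) (X : RightModStr R S M) :
    RightComodStr R S M (Δe e) ε where
  ρ := homToTensor e M ∘ₗ X.act
  counit m := by
    rw [comp_apply, ← tensorToHom_apply_one, h.tensorToHom_homToTensor, X.act_one]
  coassoc m := (h.coassoc_iff X.act m).2 (X.act_mul m)

noncomputable def RightComodStr.toMod (h : IsFrobeniusSystem e ε)
    (Y : RightComodStr R S M (Δe e) ε) : RightModStr R S M where
  act := tensorToHom ε M ∘ₗ Y.ρ
  act_one m := by rw [comp_apply, tensorToHom_apply_one, Y.counit]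
  act_mul m := by
    have hρ : homToTensor e M ∘ₗ tensorToHom ε M ∘ₗ Y.ρ = Y.ρ :=
      LinearMap.ext fun m => h.homToTensor_tensorToHom (Y.ρ m)
    refine (h.coassoc_iff _ m).1 ?_
    rw [hρ, comp_apply, h.homToTensor_tensorToHom]
    exact Y.coassoc m

attribute [ext] RightModStr RightComodStr

variable (M) in
noncomputable def IsFrobeniusSystem.rightModStrEquivRightComodStr (h : IsFrobeniusSystem e ε) :
    RightModStr R S M ≃ RightComodStr R S M (Δe e) ε where
  toFun := RightModStr.toComod h
  invFun := RightComodStr.toMod h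
  left_inv X := by
    ext m : 2
    exact h.tensorToHom_homToTensor (X.act m)
  right_inv Y := by
    ext m : 2
    exact h.homToTensor_tensorToHom (Y.ρ m)

theorem IsFrobeniusSystem.rTensor_toComod_iff (h : IsFrobeniusSystem e ε)
    (X : RightModStr R S M) (X' : RightModStr R S N) (f : M →ₗ[R] N) :
    (∀ m, rTensor S f ((X.toComod h).ρ m) = (X'.toComod h).ρ (f m)) ↔
      ∀ m s, f (X.act m s) = X'.act (f m) s := by
  refine forall_congr' fun m => ?_
  change rTensor S f (homToTensor e M (X.act m)) = homToTensor e N (X'.act (f m)) ↔ _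
  rw [rTensor_homToTensor, h.homToTensor_injective.eq_iff, LinearMap.ext_iff]
  rfl

end Frobenius

/-- For a Frobenius extension `S/R`, right `S`-module structures and right
`S`-comodule structures (over the coring `Δ(s) = s·e`, counit `ε`) on any
`R`-module correspond bijectively via `ρ(m) = m·e¹ ⊗ e²` and
`m·s = m₍₀₎ ε(m₍₁₎ s)`, and an `R`-linear map between two such objects is a
module map iff it is a comodule map; thus the categories of right `S`-modules
and right `S`-comodules are isomorphic via functors acting as the identity on
morphisms. -/
theorem modules_iso_comodules_of_frobenius
    {R S : Type*} [CommRing R] [Ring S] [Algebra R S]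
    (e : S ⊗[R] S) (ε : S →ₗ[R] R) (h : IsFrobeniusSystem e ε)
    (M N : Type*) [AddCommGroup M] [Module R M] [AddCommGroup N] [Module R N] :
    ∃ (ΦM : RightModStr R S M ≃ RightComodStr R S M (Δe e) ε)
      (ΦN : RightModStr R S N ≃ RightComodStr R S N (Δe e) ε),
      -- the coaction associated to an action: `ρ(m) = m·e¹ ⊗ e²`
      (∀ (X : RightModStr R S M) (m : M),
        (ΦM X).ρ m = LinearMap.rTensor S (X.act m) e) ∧
      (∀ (X : RightModStr R S N) (n : N),
        (ΦN X).ρ n = LinearMap.rTensor S (X.act n) e) ∧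
      -- the action associated to a coaction: `m·s = m₍₀₎ ε(m₍₁₎ s)`
      (∀ (Y : RightComodStr R S M (Δe e) ε) (m : M) (s : S),
        (ΦM.symm Y).act m s
          = TensorProduct.rid R M
              (LinearMap.lTensor M (ε ∘ₗ LinearMap.mulRight R s) (Y.ρ m))) ∧
      (∀ (Y : RightComodStr R S N (Δe e) ε) (n : N) (s : S),
        (ΦN.symm Y).act n s
          = TensorProduct.rid R N
              (LinearMap.lTensor N (ε ∘ₗ LinearMap.mulRight R s) (Y.ρ n))) ∧
      -- functoriality: a map is `S`-linear iff it is `S`-colinear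
      (∀ (X : RightModStr R S M) (X' : RightModStr R S N) (f : M →ₗ[R] N),
        (∀ (m : M) (s : S), f (X.act m s) = X'.act (f m) s) ↔
        (∀ m : M, LinearMap.rTensor S f ((ΦM X).ρ m) = (ΦN X').ρ (f m))) :=
  ⟨h.rightModStrEquivRightComodStr M, h.rightModStrEquivRightComodStr N,
    fun _ _ => rfl, fun _ _ => rfl, fun _ _ _ => rfl, fun _ _ _ => rfl,
    fun X X' f => (h.rTensor_toComod_iff X X' f).symm⟩
end

section
/- Let i : R → S be a ring homomorphism. If the induction functor F = (−) ⊗_R S : Mod-R → Mod-S and the restriction functor G : Mod-S → Mod-R form a Frobenius pair (i.e., G is simultaneously left and right adjoint to F), then S/R is a Frobenius extension: there exist e ∈ (S ⊗_R S)^S and an R-bimodule map ε : S → R with ε(e¹)e² = e¹ε(e²) = 1. -/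
/-!
Write `G ⊣ F` for restriction and induction, with unit `η` and counit `c`. The unit at the
regular module is an `S`-linear map `S → S ⊗_R S`; its value `e` at `1` is `S`-central by
naturality of `η` along right multiplications. The counit at `R`, precomposed with
`s ↦ s ⊗ 1`, is an `R`-linear form `ε`, and naturality of `c` shows `c_M (x ⊗ m) = ε(x) m`
for every `M`. With these formulas the two triangle identities, evaluated at `1 ∈ S` and at
`1 ⊗ 1 ∈ S ⊗_R R`, read `ε(e¹)e² = 1` and `e¹ε(e²) = 1`.
-/

open TensorProduct CategoryTheory

/-- The induction (extension-of-scalars) functor `Mod-R ⥤ Mod-S`,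
`M ↦ S ⊗[R] M`. -/
noncomputable def inductionFunctor (R S : Type u) [CommRing R] [Ring S]
    [Algebra R S] : ModuleCat.{u} R ⥤ ModuleCat.{u} S where
  obj M := ModuleCat.of S (S ⊗[R] M)
  map f := ModuleCat.ofHom (LinearMap.baseChange S f.hom)
  map_id _ := ModuleCat.hom_ext LinearMap.baseChange_id
  map_comp f g := ModuleCat.hom_ext (LinearMap.baseChange_comp (A := S) f.hom g.hom)

universe u

theorem TensorProduct.smul_eq_rTensor_mulLeft {R S M : Type*} [CommSemiring R] [Semiring S]
    [Algebra R S] [AddCommMonoid M] [Module R M] (s : S) (t : S ⊗[R] M) :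
    s • t = (LinearMap.mulLeft R s).rTensor M t := by
  induction t using TensorProduct.induction_on with
  | zero => rw [smul_zero, map_zero]
  | tmul x m => rfl
  | add t t' ht ht' => rw [smul_add, map_add, ht, ht']

theorem inductionFunctor_map_apply {R S : Type u} [CommRing R] [Ring S] [Algebra R S]
    {M N : ModuleCat.{u} R} (f : M ⟶ N) (t : S ⊗[R] M) :
    ((inductionFunctor R S).map f).hom t = f.hom.lTensor S t := by
  change f.hom.baseChange S t = _
  rw [LinearMap.baseChange_eq_ltensor]

variable {R S : Type u} [CommRing R] [Ring S] [Algebra R S]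

/-- The restricted regular module has `r • x = algebraMap R S r * x`, which agrees with the
algebra's own action only propositionally, so the identification has to be made explicit. -/
def restrictScalarsRegularIso :
    (ModuleCat.restrictScalars (algebraMap R S)).obj (ModuleCat.of S S) ≅ ModuleCat.of R S :=
  LinearEquiv.toModuleIso
    ({ AddEquiv.refl S with map_smul' := fun r (x : S) => (Algebra.smul_def r x).symm } :
      (ModuleCat.restrictScalars (algebraMap R S)).obj (ModuleCat.of S S) ≃ₗ[R] S)

noncomputable def tmulOneHom : ModuleCat.of S S ⟶ (inductionFunctor R S).obj (ModuleCat.of R R) :=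
  ModuleCat.ofHom (LinearMap.toSpanSingleton S _ ((1 : S) ⊗ₜ[R] (1 : R)))

theorem tmulOneHom_apply (x : S) : tmulOneHom.hom x = x ⊗ₜ[R] (1 : R) := by
  change LinearMap.toSpanSingleton S (S ⊗[R] R) ((1 : S) ⊗ₜ[R] (1 : R)) x = _
  rw [LinearMap.toSpanSingleton_apply, smul_tmul', smul_eq_mul, mul_one]

namespace CategoryTheory.Adjunction

variable (adj : ModuleCat.restrictScalars (algebraMap R S) ⊣ inductionFunctor R S)

noncomputable def frobeniusForm : S →ₗ[R] R :=
  (restrictScalarsRegularIso.inv ≫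
    (ModuleCat.restrictScalars (algebraMap R S)).map tmulOneHom ≫
    adj.counit.app (ModuleCat.of R R)).hom

noncomputable def regularUnit : ModuleCat.of S S ⟶ (inductionFunctor R S).obj (ModuleCat.of R S) :=
  adj.unit.app (ModuleCat.of S S) ≫ (inductionFunctor R S).map restrictScalarsRegularIso.hom

noncomputable def frobeniusElement : S ⊗[R] S :=
  adj.regularUnit.hom (1 : S)

theorem frobeniusForm_apply (x : S) :
    adj.frobeniusForm x = (adj.counit.app (ModuleCat.of R R)).hom (x ⊗ₜ[R] (1 : R)) := by
  rw [← tmulOneHom_apply]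
  rfl

theorem counit_app_tmul (M : ModuleCat.{u} R) (x : S) (m : M) :
    (adj.counit.app M).hom (x ⊗ₜ[R] m) = adj.frobeniusForm x • m := by
  let g : ModuleCat.of R R ⟶ M := ModuleCat.ofHom (LinearMap.toSpanSingleton R M m)
  have h := LinearMap.congr_fun (congrArg ModuleCat.Hom.hom (adj.counit.naturality g))
    (x ⊗ₜ[R] (1 : R))
  change (adj.counit.app M).hom (g.hom.baseChange S (x ⊗ₜ[R] (1 : R))) = _ at h
  rw [LinearMap.baseChange_tmul, ModuleCat.hom_ofHom, LinearMap.toSpanSingleton_apply,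
    one_smul] at h
  rw [h, frobeniusForm_apply]
  rfl

theorem ctrL_frobeniusForm_apply (t : S ⊗[R] S) :
    ctrL adj.frobeniusForm t = (adj.counit.app (ModuleCat.of R S)).hom t := by
  induction t using TensorProduct.induction_on with
  | zero => exact (map_zero _).trans (map_zero (adj.counit.app (ModuleCat.of R S)).hom).symm
  | tmul x y =>
    rw [counit_app_tmul]
    simp only [ctrL, LinearMap.comp_apply, LinearMap.rTensor_tmul, LinearEquiv.coe_coe,
      TensorProduct.lid_tmul]
  | add t t' ht ht' =>
    rw [map_add, ht, ht']
    exact (map_add (adj.counit.app (ModuleCat.of R S)).hom t t').symm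

theorem regularUnit_comp_map_mulRight (s : S) :
    adj.regularUnit ≫ (inductionFunctor R S).map (ModuleCat.ofHom (LinearMap.mulRight R s))
      = ModuleCat.ofHom (LinearMap.mulRight S s) ≫ adj.regularUnit := by
  have hρ : (ModuleCat.restrictScalars (algebraMap R S)).map
        (ModuleCat.ofHom (LinearMap.mulRight S s)) ≫ restrictScalarsRegularIso.hom
      = restrictScalarsRegularIso.hom ≫ ModuleCat.ofHom (LinearMap.mulRight R s) := rfl
  rw [regularUnit, Category.assoc, ← Functor.map_comp, ← hρ, Functor.map_comp,
    ← Category.assoc, ← Category.assoc]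
  exact congrArg (· ≫ _) (adj.unit.naturality _).symm

theorem smul_frobeniusElement (s : S) :
    s • adj.frobeniusElement = (LinearMap.mulRight R s).lTensor S adj.frobeniusElement := by
  have h := LinearMap.congr_fun (congrArg ModuleCat.Hom.hom
    (adj.regularUnit_comp_map_mulRight s)) (1 : S)
  simp only [ModuleCat.hom_comp, LinearMap.comp_apply, ModuleCat.hom_ofHom,
    LinearMap.mulRight_apply, one_mul] at h
  have hs := adj.regularUnit.hom.map_smul s 1
  rw [smul_eq_mul, mul_one] at hs
  exact hs.symm.trans (h.symm.trans (inductionFunctor_map_apply _ _))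

theorem map_regularUnit_comp_counit :
    (ModuleCat.restrictScalars (algebraMap R S)).map adj.regularUnit
      ≫ adj.counit.app (ModuleCat.of R S) = restrictScalarsRegularIso.hom := by
  rw [regularUnit, Functor.map_comp, Category.assoc]
  change _ ≫ (inductionFunctor R S ⋙ ModuleCat.restrictScalars (algebraMap R S)).map _ ≫ _ = _
  rw [adj.counit.naturality, ← Category.assoc, adj.left_triangle_components]
  exact Category.id_comp _

theorem regularUnit_comp_map_frobeniusForm :
    adj.regularUnit ≫ (inductionFunctor R S).map (ModuleCat.ofHom adj.frobeniusForm)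
      = tmulOneHom := by
  rw [frobeniusForm, ModuleCat.ofHom_hom, Functor.map_comp, Functor.map_comp, regularUnit,
    Category.assoc, ← Functor.map_comp_assoc, Iso.hom_inv_id, Functor.map_id,
    Category.id_comp, ← Category.assoc]
  change (adj.unit.app _ ≫ (ModuleCat.restrictScalars (algebraMap R S) ⋙
    inductionFunctor R S).map tmulOneHom) ≫ _ = _
  rw [← adj.unit.naturality, Category.assoc, adj.right_triangle_components]
  exact Category.comp_id _

theorem ctrL_frobeniusElement : ctrL adj.frobeniusForm adj.frobeniusElement = 1 := by
  rw [ctrL_frobeniusForm_apply]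
  exact LinearMap.congr_fun (congrArg ModuleCat.Hom.hom adj.map_regularUnit_comp_counit) (1 : S)

theorem ctrR_frobeniusElement : ctrR adj.frobeniusForm adj.frobeniusElement = 1 := by
  have h := LinearMap.congr_fun (congrArg ModuleCat.Hom.hom adj.regularUnit_comp_map_frobeniusForm)
    (1 : S)
  simp only [ModuleCat.hom_comp, LinearMap.comp_apply] at h
  have h' : adj.frobeniusForm.lTensor S adj.frobeniusElement = (1 : S) ⊗ₜ[R] (1 : R) :=
    (inductionFunctor_map_apply (ModuleCat.ofHom adj.frobeniusForm) _).symm.trans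
      (h.trans (tmulOneHom_apply 1))
  rw [ctrR, LinearMap.comp_apply, h', LinearEquiv.coe_coe, TensorProduct.rid_tmul, one_smul]

theorem isFrobeniusSystem : IsFrobeniusSystem adj.frobeniusElement adj.frobeniusForm :=
  ⟨fun s => (TensorProduct.smul_eq_rTensor_mulLeft s _).symm.trans (adj.smul_frobeniusElement s),
    adj.ctrL_frobeniusElement, adj.ctrR_frobeniusElement⟩

end CategoryTheory.Adjunction

theorem frobenius_extension_of_frobenius_pair_general
    (R S : Type u) [CommRing R] [Ring S] [Algebra R S]
    (h₂ : Nonempty (ModuleCat.restrictScalars (algebraMap R S) ⊣ inductionFunctor R S)) :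
    ∃ (e : S ⊗[R] S) (ε : S →ₗ[R] R), IsFrobeniusSystem e ε := by
  obtain ⟨adj⟩ := h₂
  exact ⟨_, _, adj.isFrobeniusSystem⟩

/-- If restriction is both a left and a right adjoint of induction (a Frobenius
pair), then `S/R` admits a Frobenius system, i.e. is a Frobenius extension. -/
theorem frobenius_extension_of_frobenius_pair
    (R S : Type u) [CommRing R] [Ring S] [Algebra R S]
    (h₁ : Nonempty (inductionFunctor R S ⊣ ModuleCat.restrictScalars (algebraMap R S)))
    (h₂ : Nonempty (ModuleCat.restrictScalars (algebraMap R S) ⊣ inductionFunctor R S)) :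
    ∃ (e : S ⊗[R] S) (ε : S →ₗ[R] R), IsFrobeniusSystem e ε :=
  frobenius_extension_of_frobenius_pair_general R S h₂
end
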